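/- arXiv:2305.15625 — 3 statements merged into one kernel-verified Lean document; each statement's English description precedes it below -/
import Mathlib

section
/- Let G = (V, E) be a finite simple claw-free graph and let C ⊆ V induce a cycle of even length 2k with k > 2. Let a₀ ∈ C and let b₀, b₁ be the two neighbors of a₀ within C. Let s ∉ C be a vertex whose neighbors in C are exactly {b₀, a₀, b₁}, and let t ∉ C ∪ {s} be a vertex adjacent to at least one of s and a₀ and adjacent to both b₀ and b₁. Then t is adjacent to both s and a₀. (Corollary 5.) -/
open scoped Classical

universe u

/-- `G` is claw-free: no vertex has three pairwise distinct, pairwise non-adjacent neighbors. -/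
def ClawFree {V : Type u} (G : SimpleGraph V) : Prop :=
  ¬ ∃ c x y z : V, x ≠ y ∧ x ≠ z ∧ y ≠ z ∧
    G.Adj c x ∧ G.Adj c y ∧ G.Adj c z ∧ ¬ G.Adj x y ∧ ¬ G.Adj x z ∧ ¬ G.Adj y z

/-- `C` induces a cycle of length at least 4 in `G`: it has at least four vertices, the
induced subgraph is connected, and every vertex of `C` has exactly two neighbors in `C`. -/
def IsHole {V : Type u} [DecidableEq V] (G : SimpleGraph V) (C : Finset V) : Prop :=
  4 ≤ C.card ∧ (G.induce (C : Set V)).Connected ∧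
    ∀ v ∈ C, (C.filter fun u => G.Adj v u).card = 2

/-!
Let `c₀` and `c₁` be the other cycle neighbours of `b₀` and `b₁`. Since the hole has length at
least six, `c₀ - b₀ - a₀ - b₁ - c₁` is an induced path, and both `s` and `a₀` are adjacent to
`b₀, b₁` but not to `c₀, c₁`. Say `t` is adjacent to one of `s, a₀` but not to the other, `y`.
The claw at `bᵢ` on `y, t, cᵢ` forces `t ∼ cᵢ`, and then `t` is the centre of a claw on the
vertex it sees among `s, a₀`, together with `c₀` and `c₁`.
-/

namespace ClawFree

variable {V : Type u} {G : SimpleGraph V}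

theorem adj_of_compl_adj (hcf : ClawFree G) {c x y z : V} (hcx : G.Adj c x) (hcy : G.Adj c y)
    (hcz : G.Adj c z) (hxy : Gᶜ.Adj x y) (hxz : Gᶜ.Adj x z) (hyz : y ≠ z) : G.Adj y z := by
  by_contra hnyz
  exact hcf ⟨c, x, y, z, hxy.ne, hxz.ne, hyz, hcx, hcy, hcz, hxy.2, hxz.2, hnyz⟩

theorem adj_of_common_neighbors (hcf : ClawFree G) {t x y b₀ b₁ c₀ c₁ : V}
    (htx : G.Adj t x) (htb₀ : G.Adj t b₀) (htb₁ : G.Adj t b₁)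
    (hyb₀ : G.Adj y b₀) (hyb₁ : G.Adj y b₁) (hbc₀ : G.Adj b₀ c₀) (hbc₁ : G.Adj b₁ c₁)
    (hxc₀ : Gᶜ.Adj x c₀) (hxc₁ : Gᶜ.Adj x c₁) (hyc₀ : Gᶜ.Adj y c₀) (hyc₁ : Gᶜ.Adj y c₁)
    (hcc : Gᶜ.Adj c₀ c₁) (hty : t ≠ y) : G.Adj t y := by
  by_contra hnty
  have hyt : Gᶜ.Adj y t := (G.compl_adj y t).2 ⟨hty.symm, fun h => hnty h.symm⟩
  have htc₀ : G.Adj t c₀ :=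
    hcf.adj_of_compl_adj hyb₀.symm htb₀.symm hbc₀ hyt hyc₀ fun h => hxc₀.2 (h ▸ htx.symm)
  have htc₁ : G.Adj t c₁ :=
    hcf.adj_of_compl_adj hyb₁.symm htb₁.symm hbc₁ hyt hyc₁ fun h => hxc₁.2 (h ▸ htx.symm)
  exact hcc.2 (hcf.adj_of_compl_adj htx htc₀ htc₁ hxc₀ hxc₁ hcc.ne)

end ClawFree

theorem subset_of_induce_connected {V : Type u} {G : SimpleGraph V} {C : Finset V}
    (hconn : (G.induce (C : Set V)).Connected) {S : Finset V}
    (hS : ∀ v ∈ S, C.filter (G.Adj v) ⊆ S) {y : V} (hyC : y ∈ C) (hyS : y ∈ S) : C ⊆ S := by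
  have walk_mem : ∀ {u v : (C : Set V)}, (G.induce (C : Set V)).Walk u v →
      (u : V) ∈ S → (v : V) ∈ S := by
    intro u v p
    induction p with
    | nil => exact id
    | cons huw _ ih => exact fun hu => ih (hS _ hu (Finset.mem_filter.2 ⟨by simp, huw⟩))
  intro x hx
  obtain ⟨p⟩ := hconn.preconnected ⟨y, hyC⟩ ⟨x, hx⟩
  exact walk_mem p hyS

theorem compl_adj_of_filter_subset {V : Type u} {G : SimpleGraph V} {C N : Finset V} {v c : V}
    (hv : C.filter (G.Adj v) ⊆ N) (hc : c ∈ C) (hcN : c ∉ N) (hvc : v ≠ c) : Gᶜ.Adj v c :=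
  ⟨hvc, fun h => hcN (hv (Finset.mem_filter.2 ⟨hc, h⟩))⟩

namespace IsHole

variable {V : Type u} [DecidableEq V] {G : SimpleGraph V} {C : Finset V}

theorem card_le_of_closed (hC : IsHole G C) {S : Finset V}
    (hS : ∀ v ∈ S, C.filter (G.Adj v) ⊆ S) {y : V} (hyC : y ∈ C) (hyS : y ∈ S) :
    C.card ≤ S.card :=
  Finset.card_le_card (subset_of_induce_connected hC.2.1 hS hyC hyS)

theorem filter_adj_eq_pair (hC : IsHole G C) {v x y : V} (hv : v ∈ C) (hx : x ∈ C)
    (hy : y ∈ C) (hxy : x ≠ y) (hvx : G.Adj v x) (hvy : G.Adj v y) :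
    C.filter (G.Adj v) = {x, y} := by
  refine (Finset.eq_of_subset_of_card_le ?_ ?_).symm
  · simp [Finset.insert_subset_iff, hx, hy, hvx, hvy]
  · rw [hC.2.2 v hv, Finset.card_pair hxy]

theorem exists_adj_ne (hC : IsHole G C) {v : V} (hv : v ∈ C) (x : V) :
    ∃ y ∈ C, G.Adj v y ∧ y ≠ x := by
  obtain ⟨y, hy, hyx⟩ := Finset.exists_mem_ne (by rw [hC.2.2 v hv]; norm_num) x
  exact ⟨y, (Finset.mem_filter.1 hy).1, (Finset.mem_filter.1 hy).2, hyx⟩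

theorem not_adj_of_adj_of_adj (hC : IsHole G C) {a b₀ b₁ : V} (ha : a ∈ C) (hb₀ : b₀ ∈ C)
    (hb₁ : b₁ ∈ C) (hab₀ : G.Adj a b₀) (hab₁ : G.Adj a b₁) : ¬ G.Adj b₀ b₁ := by
  intro h
  have fa := hC.filter_adj_eq_pair ha hb₀ hb₁ h.ne hab₀ hab₁
  have fb₀ := hC.filter_adj_eq_pair hb₀ ha hb₁ hab₁.ne hab₀.symm h
  have fb₁ := hC.filter_adj_eq_pair hb₁ ha hb₀ hab₀.ne hab₁.symm h.symm
  have := hC.card_le_of_closed (S := {a, b₀, b₁}) (by simp [fa, fb₀, fb₁,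
    Finset.insert_subset_iff]) ha (by simp)
  have := this.trans Finset.card_le_three
  have := hC.1
  omega

theorem exists_induced_path_five (hC : IsHole G C) (h6 : 6 ≤ C.card) {a₀ b₀ b₁ : V}
    (ha₀ : a₀ ∈ C) (hb₀ : b₀ ∈ C) (hb₁ : b₁ ∈ C) (hbne : b₀ ≠ b₁)
    (hab₀ : G.Adj a₀ b₀) (hab₁ : G.Adj a₀ b₁) :
    ∃ c₀ ∈ C, ∃ c₁ ∈ C, G.Adj b₀ c₀ ∧ G.Adj b₁ c₁ ∧ c₀ ≠ b₁ ∧ c₁ ≠ b₀ ∧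
      Gᶜ.Adj a₀ c₀ ∧ Gᶜ.Adj a₀ c₁ ∧ Gᶜ.Adj c₀ c₁ := by
  have fa := hC.filter_adj_eq_pair ha₀ hb₀ hb₁ hbne hab₀ hab₁
  have hbb := hC.not_adj_of_adj_of_adj ha₀ hb₀ hb₁ hab₀ hab₁
  obtain ⟨c₀, hc₀, hbc₀, hc₀a⟩ := hC.exists_adj_ne hb₀ a₀
  obtain ⟨c₁, hc₁, hbc₁, hc₁a⟩ := hC.exists_adj_ne hb₁ a₀
  have fb₀ := hC.filter_adj_eq_pair hb₀ ha₀ hc₀ hc₀a.symm hab₀.symm hbc₀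
  have fb₁ := hC.filter_adj_eq_pair hb₁ ha₀ hc₁ hc₁a.symm hab₁.symm hbc₁
  have hc₀b₁ : c₀ ≠ b₁ := by rintro rfl; exact hbb hbc₀
  have hc₁b₀ : c₁ ≠ b₀ := by rintro rfl; exact hbb hbc₁.symm
  have hac : ∀ c ∈ C, c ≠ b₀ → c ≠ b₁ → c ≠ a₀ → Gᶜ.Adj a₀ c := fun c hc hcb₀ hcb₁ hca =>
    compl_adj_of_filter_subset fa.le hc (by simp [hcb₀, hcb₁]) hca.symm
  have hcc : c₀ ≠ c₁ := by
    rintro rfl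
    have fc := hC.filter_adj_eq_pair hc₀ hb₀ hb₁ hbne hbc₀.symm hbc₁.symm
    have := hC.card_le_of_closed (S := {a₀, b₀, b₁, c₀}) (by simp [fa, fb₀, fb₁, fc,
      Finset.insert_subset_iff]) ha₀ (by simp)
    have := this.trans Finset.card_le_four
    omega
  refine ⟨c₀, hc₀, c₁, hc₁, hbc₀, hbc₁, hc₀b₁, hc₁b₀, hac c₀ hc₀ hbc₀.ne.symm hc₀b₁ hc₀a,
    hac c₁ hc₁ hc₁b₀ hbc₁.ne.symm hc₁a, hcc, fun h => ?_⟩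
  have fc₀ := hC.filter_adj_eq_pair hc₀ hb₀ hc₁ hc₁b₀.symm hbc₀.symm h
  have fc₁ := hC.filter_adj_eq_pair hc₁ hb₁ hc₀ hc₀b₁.symm hbc₁.symm h.symm
  have := hC.card_le_of_closed (S := {a₀, b₀, b₁, c₀, c₁}) (by simp [fa, fb₀, fb₁, fc₀, fc₁,
    Finset.insert_subset_iff]) ha₀ (by simp)
  have := this.trans Finset.card_le_five
  omega

end IsHole

theorem clone_neighbor_both_general {V : Type u} [DecidableEq V]
    (G : SimpleGraph V) (hcf : ClawFree G) (C : Finset V) (k : ℕ)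
    (hC : IsHole G C) (hcard : C.card = 2 * k) (hk : 2 < k)
    (a₀ b₀ b₁ : V) (ha₀ : a₀ ∈ C) (hb₀ : b₀ ∈ C) (hb₁ : b₁ ∈ C) (hbne : b₀ ≠ b₁)
    (hab₀ : G.Adj a₀ b₀) (hab₁ : G.Adj a₀ b₁)
    (s : V) (hs : s ∉ C) (hsnbr : C.filter (fun w => G.Adj s w) = {b₀, a₀, b₁})
    (t : V) (ht : t ∉ C) (hts : t ≠ s)
    (hsome : G.Adj t s ∨ G.Adj t a₀) (htb₀ : G.Adj t b₀) (htb₁ : G.Adj t b₁) :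
    G.Adj t s ∧ G.Adj t a₀ := by
  obtain ⟨c₀, hc₀, c₁, hc₁, hbc₀, hbc₁, hc₀b₁, hc₁b₀, hac₀, hac₁, hcc⟩ :=
    hC.exists_induced_path_five (by omega) ha₀ hb₀ hb₁ hbne hab₀ hab₁
  have hsc : ∀ c ∈ C, c ≠ b₀ → c ≠ b₁ → Gᶜ.Adj a₀ c → Gᶜ.Adj s c :=
    fun c hc hcb₀ hcb₁ hac => compl_adj_of_filter_subset hsnbr.le hc
      (by simp [hcb₀, hcb₁, hac.ne.symm]) (ne_of_mem_of_not_mem hc hs).symm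
  have hsc₀ := hsc c₀ hc₀ hbc₀.ne.symm hc₀b₁ hac₀
  have hsc₁ := hsc c₁ hc₁ hc₁b₀ hbc₁.ne.symm hac₁
  have hsN : ∀ w ∈ ({b₀, a₀, b₁} : Finset V), G.Adj s w :=
    fun w hw => (Finset.mem_filter.1 (hsnbr.ge hw)).2
  rcases hsome with hts' | hta
  · exact ⟨hts', hcf.adj_of_common_neighbors hts' htb₀ htb₁ hab₀ hab₁ hbc₀ hbc₁ hsc₀ hsc₁
      hac₀ hac₁ hcc (ne_of_mem_of_not_mem ha₀ ht).symm⟩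
  · exact ⟨hcf.adj_of_common_neighbors hta htb₀ htb₁ (hsN b₀ (by simp)) (hsN b₁ (by simp))
      hbc₀ hbc₁ hac₀ hac₁ hsc₀ hsc₁ hcc hts, hta⟩

/-- Corollary 5: let `C` induce a cycle of even length `2k` with `k > 2` in a claw-free graph,
let `b₀, a₀, b₁` be consecutive vertices of `C`, let `s ∉ C` have neighbors in `C` exactly
`{b₀, a₀, b₁}`, and let `t ∉ C ∪ {s}` be adjacent to at least one of `s` and `a₀` and to both
of `b₀` and `b₁`.  Then `t` is adjacent to both `s` and `a₀`. -/
theorem clone_neighbor_both {V : Type u} [Fintype V] [DecidableEq V]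
    (G : SimpleGraph V) (hcf : ClawFree G) (C : Finset V) (k : ℕ)
    (hC : IsHole G C) (hcard : C.card = 2 * k) (hk : 2 < k)
    (a₀ b₀ b₁ : V) (ha₀ : a₀ ∈ C) (hb₀ : b₀ ∈ C) (hb₁ : b₁ ∈ C) (hbne : b₀ ≠ b₁)
    (hab₀ : G.Adj a₀ b₀) (hab₁ : G.Adj a₀ b₁)
    (s : V) (hs : s ∉ C) (hsnbr : C.filter (fun w => G.Adj s w) = {b₀, a₀, b₁})
    (t : V) (ht : t ∉ C) (hts : t ≠ s)
    (hsome : G.Adj t s ∨ G.Adj t a₀) (htb₀ : G.Adj t b₀) (htb₁ : G.Adj t b₁) :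
    G.Adj t s ∧ G.Adj t a₀ :=
  clone_neighbor_both_general G hcf C k hC hcard hk a₀ b₀ b₁ ha₀ hb₀ hb₁ hbne hab₀ hab₁ s hs hsnbr t
    ht hts hsome htb₀ htb₁
end

section
/- Let G = (V, E) be a finite simple graph with an operator realization and let K be a clique of G. Then for every k ≥ 1: Q_k(G) = Q_k(G[V \ K]) + Σ_{j ∈ K} h(j)·Q_{k−1}(G[V \ N[j]]), where N[j] is the closed neighborhood of j. (Equation (18), the clique recursion for independent-set charges.) -/
open scoped Classical

universe u

/-- `S` is an independent set of `G`. -/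
def IsIndep {V : Type u} (G : SimpleGraph V) (S : Finset V) : Prop :=
  ∀ u ∈ S, ∀ v ∈ S, ¬ G.Adj u v

/-- The product `h(S) = ∏_{v ∈ S} h v`, well defined when the factors pairwise commute. -/
noncomputable def hProd {V : Type u} {d : ℕ} (h : V → Matrix (Fin d) (Fin d) ℂ)
    (S : Finset V) : Matrix (Fin d) (Fin d) ℂ :=
  if hc : (S : Set V).Pairwise fun u v => Commute (h u) (h v) then S.noncommProd h hc
  else 0

/-- The independent-set charge `Q_k(G[U])`: the sum of `h(S)` over all independent sets
`S ⊆ U` of `G` with `|S| = k`. -/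
noncomputable def charge {V : Type u} {d : ℕ} [Fintype V] [DecidableEq V]
    (G : SimpleGraph V) (h : V → Matrix (Fin d) (Fin d) ℂ) (U : Finset V) (k : ℕ) :
    Matrix (Fin d) (Fin d) ℂ :=
  ∑ S ∈ Finset.univ.filter (fun S : Finset V => S ⊆ U ∧ IsIndep G S ∧ S.card = k),
    hProd h S

/-- The closed neighborhood of a vertex `j`, as a finset. -/
noncomputable def closedNbhdF {V : Type u} [Fintype V] [DecidableEq V]
    (G : SimpleGraph V) (j : V) : Finset V :=
  insert j (Finset.univ.filter fun v => G.Adj j v)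

lemma indep_pairwise_commute {V : Type u} {d : ℕ}
    {G : SimpleGraph V} {h : V → Matrix (Fin d) (Fin d) ℂ}
    (hcomm : ∀ u v, u ≠ v → ¬ G.Adj u v → h u * h v = h v * h u)
    {S : Finset V} (hS : IsIndep G S) :
    (S : Set V).Pairwise fun u v => Commute (h u) (h v) :=
  fun u hu v hv huv => hcomm u v huv (hS u hu v hv)

lemma hProd_insert {V : Type u} [DecidableEq V] {d : ℕ}
    {G : SimpleGraph V} {h : V → Matrix (Fin d) (Fin d) ℂ}
    (hcomm : ∀ u v, u ≠ v → ¬ G.Adj u v → h u * h v = h v * h u)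
    {j : V} {S : Finset V} (hj : j ∉ S) (hind : IsIndep G (insert j S)) :
    hProd h (insert j S) = h j * hProd h S := by
  have hc : ((insert j S : Finset V) : Set V).Pairwise fun u v => Commute (h u) (h v) :=
    indep_pairwise_commute hcomm hind
  have hc' : ((S : Finset V) : Set V).Pairwise fun u v => Commute (h u) (h v) :=
    hc.mono (by intro x hx; simp_all)
  rw [hProd, hProd, dif_pos hc, dif_pos hc',
    Finset.noncommProd_insert_of_notMem _ _ _ _ hj]

/-- Equation (18): the clique recursion for the independent-set charges,
`Q_k(G) = Q_k(G \ K) + Σ_{j ∈ K} h(j)·Q_{k−1}(G \ N[j])` for any clique `K`. -/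
theorem charge_clique_recursion {V : Type u} [Fintype V] [DecidableEq V]
    (G : SimpleGraph V) (d : ℕ) (hd : 0 < d)
    (h : V → Matrix (Fin d) (Fin d) ℂ) (b : V → ℝ) (hb : ∀ v, b v ≠ 0)
    (hsq : ∀ v, h v * h v = ((b v : ℂ)) ^ 2 • (1 : Matrix (Fin d) (Fin d) ℂ))
    (hanti : ∀ u v, G.Adj u v → h u * h v = -(h v * h u))
    (hcomm : ∀ u v, u ≠ v → ¬ G.Adj u v → h u * h v = h v * h u)
    (K : Finset V) (hK : ∀ u ∈ K, ∀ v ∈ K, u ≠ v → G.Adj u v)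
    (k : ℕ) (hk : 1 ≤ k) :
    charge G h Finset.univ k =
      charge G h (Finset.univ \ K) k +
        ∑ j ∈ K, h j * charge G h (Finset.univ \ closedNbhdF G j) (k - 1) := by
  classical
  -- the big index set
  set A : Finset (Finset V) :=
    Finset.univ.filter (fun S : Finset V => S ⊆ Finset.univ ∧ IsIndep G S ∧ S.card = k) with hA
  -- split off sets disjoint from K
  have hsplit :
      charge G h Finset.univ k =
        (∑ S ∈ A.filter (fun S => Disjoint S K), hProd h S) +
          (∑ S ∈ A.filter (fun S => ¬ Disjoint S K), hProd h S) := by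
    rw [charge, ← Finset.sum_filter_add_sum_filter_not A (fun S => Disjoint S K)]
  -- the disjoint part is the first summand
  have h1 : (∑ S ∈ A.filter (fun S => Disjoint S K), hProd h S)
      = charge G h (Finset.univ \ K) k := by
    rw [charge]
    apply Finset.sum_congr _ (fun _ _ => rfl)
    ext S
    simp only [hA, Finset.mem_filter, Finset.mem_univ, true_and]
    constructor
    · rintro ⟨⟨-, hi, hc⟩, hd⟩
      refine ⟨fun x hx => Finset.mem_sdiff.2 ⟨Finset.mem_univ x, ?_⟩, hi, hc⟩
      exact Finset.disjoint_left.1 hd hx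
    · rintro ⟨hsub, hi, hc⟩
      refine ⟨⟨Finset.subset_univ S, hi, hc⟩, Finset.disjoint_left.2 ?_⟩
      intro x hx hxK
      exact (Finset.mem_sdiff.1 (hsub hx)).2 hxK
  -- the other part: each S meeting K contains exactly one j ∈ K
  have h2 : (∑ S ∈ A.filter (fun S => ¬ Disjoint S K), hProd h S)
      = ∑ j ∈ K, ∑ S ∈ A.filter (fun S => j ∈ S), hProd h S := by
    have hdisj : (K : Set V).PairwiseDisjoint (fun j => A.filter (fun S => j ∈ S)) := by
      intro i hi j hj hij
      simp only [Finset.disjoint_left, Finset.mem_filter]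
      rintro S ⟨hSA, hiS⟩ ⟨-, hjS⟩
      have hind : IsIndep G S := (Finset.mem_filter.1 hSA).2.2.1
      exact hind i hiS j hjS (hK i hi j hj hij)
    rw [← Finset.sum_biUnion hdisj]
    apply Finset.sum_congr _ (fun _ _ => rfl)
    ext S
    simp only [Finset.mem_filter, Finset.mem_biUnion]
    constructor
    · rintro ⟨hSA, hnd⟩
      obtain ⟨j, hjS, hjK⟩ := Finset.not_disjoint_iff.1 hnd
      exact ⟨j, hjK, hSA, hjS⟩
    · rintro ⟨j, hjK, hSA, hjS⟩
      exact ⟨hSA, Finset.not_disjoint_iff.2 ⟨j, hjS, hjK⟩⟩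
  -- for each j, the inner sum equals h j * charge (univ \ N[j]) (k-1)
  have h3 : ∀ j ∈ K, (∑ S ∈ A.filter (fun S => j ∈ S), hProd h S)
      = h j * charge G h (Finset.univ \ closedNbhdF G j) (k - 1) := by
    intro j hjK
    rw [charge, Finset.mul_sum]
    refine Finset.sum_bij' (fun S _ => S.erase j) (fun S' _ => insert j S') ?_ ?_ ?_ ?_ ?_
    · -- maps into target
      intro S hS
      simp only [hA, Finset.mem_filter, Finset.mem_univ, true_and] at hS ⊢
      obtain ⟨⟨-, hind, hcard⟩, hjS⟩ := hS
      refine ⟨?_, ?_, ?_⟩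
      · intro x hx
        have hxS := Finset.mem_of_mem_erase hx
        have hxj := Finset.ne_of_mem_erase hx
        refine Finset.mem_sdiff.2 ⟨Finset.mem_univ x, ?_⟩
        simp only [closedNbhdF, Finset.mem_insert, Finset.mem_filter, Finset.mem_univ, true_and]
        push_neg
        exact ⟨hxj, hind j hjS x hxS⟩
      · intro u hu v hv
        exact hind u (Finset.mem_of_mem_erase hu) v (Finset.mem_of_mem_erase hv)
      · rw [Finset.card_erase_of_mem hjS, hcard]
    · -- inverse maps into source
      intro S' hS'
      simp only [Finset.mem_filter, Finset.mem_univ, true_and] at hS'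
      obtain ⟨hsub, hind, hcard⟩ := hS'
      have hjS' : j ∉ S' := by
        intro hj
        have := Finset.mem_sdiff.1 (hsub hj)
        exact this.2 (by simp [closedNbhdF])
      have hindI : IsIndep G (insert j S') := by
        intro u hu v hv hadj
        rcases Finset.mem_insert.1 hu with rfl | hu' <;>
          rcases Finset.mem_insert.1 hv with rfl | hv'
        · exact G.loopless.irrefl _ hadj
        · have := Finset.mem_sdiff.1 (hsub hv')
          exact this.2 (by simp [closedNbhdF, hadj])
        · have := Finset.mem_sdiff.1 (hsub hu')
          exact this.2 (by simp [closedNbhdF, hadj.symm])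
        · exact hind u hu' v hv' hadj
      simp only [hA, Finset.mem_filter, Finset.mem_univ, true_and]
      refine ⟨⟨Finset.subset_univ _, hindI, ?_⟩, Finset.mem_insert_self j S'⟩
      rw [Finset.card_insert_of_notMem hjS', hcard]
      omega
    · -- left inverse
      intro S hS
      simp only [hA, Finset.mem_filter] at hS
      exact Finset.insert_erase hS.2
    · -- right inverse
      intro S' hS'
      simp only [Finset.mem_filter, Finset.mem_univ, true_and] at hS'
      have hjS' : j ∉ S' := by
        intro hj
        have := Finset.mem_sdiff.1 (hS'.1 hj)
        exact this.2 (by simp [closedNbhdF])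
      exact Finset.erase_insert hjS'
    · -- values agree
      intro S hS
      simp only [hA, Finset.mem_filter, Finset.mem_univ, true_and] at hS
      obtain ⟨⟨-, hind, hcard⟩, hjS⟩ := hS
      have hindE : IsIndep G (insert j (S.erase j)) := by
        rw [Finset.insert_erase hjS]; exact hind
      have := hProd_insert hcomm (Finset.notMem_erase j S) hindE
      rw [Finset.insert_erase hjS] at this
      exact this
  rw [hsplit, h1, h2]
  congr 1
  exact Finset.sum_congr rfl h3
end

section
/- Let G = (V, E) be a finite simple claw-free graph and let K_s be a simplicial clique of G. Let G★ be the graph obtained from G by adding one new vertex ★ adjacent exactly to the vertices of K_s (and to no other vertex). Then G★ is claw-free, and ★ is a simplicial vertex of G★, i.e., the neighborhood of ★ in G★ is a clique. (Claim proved in Section IV.C.) -/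
/-!
A claw centred at `★` is impossible because the neighbourhood of `★` is the clique `K`. A claw
centred at an old vertex `c` with `★` as a leaf forces `c ∈ K` and puts the other two leaves
outside `K`, so simpliciality of `K` makes them adjacent. A claw avoiding `★` is a claw of `G`.
-/

universe u

def IsSimplicialClique {V : Type u} (G : SimpleGraph V) (K : Finset V) : Prop :=
  (∀ u ∈ K, ∀ v ∈ K, u ≠ v → G.Adj u v) ∧
    ∀ j ∈ K, ∀ u v : V, u ∉ K → v ∉ K → u ≠ v → G.Adj j u → G.Adj j v → G.Adj u v

/-- `G★` on `Option V`: the new vertex `★` is `none`. -/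
def starGraph {V : Type u} (G : SimpleGraph V) (K : Finset V) : SimpleGraph (Option V) :=
  SimpleGraph.fromRel (fun x y =>
    (∃ u v : V, x = some u ∧ y = some v ∧ G.Adj u v) ∨
      (∃ u : V, x = some u ∧ y = none ∧ u ∈ K))

variable {V : Type u} {G : SimpleGraph V} {K : Finset V}

@[simp]
theorem starGraph_adj_some_some {u v : V} :
    (starGraph G K).Adj (some u) (some v) ↔ G.Adj u v := by
  simpa [starGraph, G.adj_comm v u] using SimpleGraph.Adj.ne

@[simp]
theorem starGraph_adj_none_some {u : V} : (starGraph G K).Adj none (some u) ↔ u ∈ K := by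
  simp [starGraph]

@[simp]
theorem starGraph_adj_some_none {u : V} : (starGraph G K).Adj (some u) none ↔ u ∈ K := by
  rw [SimpleGraph.adj_comm, starGraph_adj_none_some]

theorem IsSimplicialClique.isClique (hK : IsSimplicialClique G K) : G.IsClique (K : Set V) :=
  fun u hu v hv => hK.1 u hu v hv

theorem starGraph_isClique_neighborSet_none (hK : G.IsClique (K : Set V)) :
    (starGraph G K).IsClique ((starGraph G K).neighborSet none) := by
  rintro (_ | u) hu
  · exact ((starGraph G K).notMem_neighborSet_self hu).elim
  rintro (_ | v) hv huv
  · exact ((starGraph G K).notMem_neighborSet_self hv).elim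
  rw [SimpleGraph.mem_neighborSet, starGraph_adj_none_some] at hu hv
  exact starGraph_adj_some_some.2 (hK hu hv (ne_of_apply_ne some huv))

theorem IsSimplicialClique.starGraph_adj_of_not_adj_none (hK : IsSimplicialClique G K) {c : V}
    {y z : Option V} (hc : (starGraph G K).Adj (some c) none) (hy : (starGraph G K).Adj (some c) y)
    (hz : (starGraph G K).Adj (some c) z) (hny : ¬ (starGraph G K).Adj none y)
    (hnz : ¬ (starGraph G K).Adj none z) (hy₀ : y ≠ none) (hz₀ : z ≠ none) (hyz : y ≠ z) :
    (starGraph G K).Adj y z := by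
  obtain ⟨b, rfl⟩ := Option.ne_none_iff_exists'.1 hy₀
  obtain ⟨d, rfl⟩ := Option.ne_none_iff_exists'.1 hz₀
  simp only [starGraph_adj_some_some, starGraph_adj_some_none, starGraph_adj_none_some, ne_eq,
    Option.some_inj] at *
  exact hK.2 c hc b d hny hnz hyz hy hz

theorem starGraph_clawFree (hcf : ClawFree G) (hK : IsSimplicialClique G K) :
    ClawFree (starGraph G K) := by
  rintro ⟨c, x, y, z, hxy, hxz, hyz, hcx, hcy, hcz, hnxy, hnxz, hnyz⟩
  rcases c with _ | c
  · exact hnxy (starGraph_isClique_neighborSet_none hK.isClique hcx hcy hxy)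
  rcases x with _ | a
  · exact hnyz (hK.starGraph_adj_of_not_adj_none hcx hcy hcz hnxy hnxz hxy.symm hxz.symm hyz)
  rcases y with _ | b
  · exact hnxz (hK.starGraph_adj_of_not_adj_none hcy hcx hcz (hnxy ∘ .symm) hnyz
      (Option.some_ne_none a) hyz.symm hxz)
  rcases z with _ | d
  · exact hnxy (hK.starGraph_adj_of_not_adj_none hcz hcx hcy (hnxz ∘ .symm) (hnyz ∘ .symm)
      (Option.some_ne_none a) (Option.some_ne_none b) hxy)
  simp only [starGraph_adj_some_some, ne_eq, Option.some_inj] at *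
  exact hcf ⟨c, a, b, d, hxy, hxz, hyz, hcx, hcy, hcz, hnxy, hnxz, hnyz⟩

theorem starGraph_clawFree_and_simplicial_general {V : Type u}
    (G : SimpleGraph V) (hcf : ClawFree G) (K : Finset V) (hK : IsSimplicialClique G K) :
    ClawFree (starGraph G K) ∧
      ∀ x y : Option V, (starGraph G K).Adj none x → (starGraph G K).Adj none y →
        x ≠ y → (starGraph G K).Adj x y :=
  ⟨starGraph_clawFree hcf hK, fun _ _ hx hy hxy =>
    starGraph_isClique_neighborSet_none hK.isClique hx hy hxy⟩

/-- The claim proved in Section IV.C: attaching a new vertex to a simplicial clique of a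
claw-free graph yields a claw-free graph in which the new vertex is simplicial (its
neighborhood is a clique). -/
theorem starGraph_clawFree_and_simplicial {V : Type u} [DecidableEq V]
    (G : SimpleGraph V) (hcf : ClawFree G) (K : Finset V) (hK : IsSimplicialClique G K) :
    ClawFree (starGraph G K) ∧
      ∀ x y : Option V, (starGraph G K).Adj none x → (starGraph G K).Adj none y →
        x ≠ y → (starGraph G K).Adj x y :=
  starGraph_clawFree_and_simplicial_general G hcf K hK
end
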